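/- Let P be the probability measure on ℕ with P({n}) = 1/2^n for n ≥ 1. The second quantization error V_2 = inf over α ⊂ ℝ with |α| ≤ 2 of ∑_n (1/2^n) min_{a∈α}(n−a)² equals 2/3, attained at the set {4/3, 4}. -/

import Mathlib

/-!
A set `{a, b}` with `a ≤ b` sends each `n` to its nearer point, i.e. `n ≤ (a + b) / 2` to `a`
and the rest to `b`. If the first `k` atoms go to `a`, the remaining mass is again geometric (mean
`k + 2`, variance `2`), so it contributes `2⁻ᵏ ((b - k - 2)² + 2)`, and the first `k` atoms a
quadratic in `a`. Minimising, `k ≤ 1, 2, 3, ≥ 4` give at least `1, 2/3, 5/7, 97/120`; the value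
`2/3` is attained for `k = 2` at `a = 4/3 = E(X | X ≤ 2)`, `b = 4 = E(X | X ≥ 3)`.
-/

/-- Distortion error of a nonempty finite set α for the measure P({n}) = 1/2^n, n ≥ 1. -/
noncomputable def errG (α : Finset ℝ) (h : α.Nonempty) : ℝ :=
  ∑' n : ℕ, (1/2^(n+1) : ℝ) * α.inf' h (fun a => ((n+1 : ℝ) - a)^2)

open Finset

theorem hasSum_geometric_sq_sub (c : ℝ) :
    HasSum (fun n : ℕ => (1/2^(n+1) : ℝ) * ((n+1 : ℝ) - c)^2) ((c - 2)^2 + 2) := by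
  have h₀ := hasSum_geometric_two
  have h₁ := hasSum_choose_mul_geometric_of_norm_lt_one 1 (r := (1/2 : ℝ)) (by norm_num)
  have h₂ := hasSum_choose_mul_geometric_of_norm_lt_one 2 (r := (1/2 : ℝ)) (by norm_num)
  have hsum : (c - 2)^2 + 2
      = 1 / (1 - 1/2) ^ (2 + 1) - (c + 1/2) * (1 / (1 - 1/2) ^ (1 + 1)) + c^2/2 * 2 := by
    norm_num; ring
  rw [hsum]
  -- `(n + 1 - c)² = 2 (n+2 choose 2) - (2c + 1) (n+1 choose 1) + c²`
  refine ((h₂.sub (h₁.mul_left (c + 1/2))).add (h₀.mul_left (c^2/2))).congr_fun fun n => ?_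
  rw [Nat.cast_choose_two, Nat.choose_one_right, pow_succ, one_div_pow]
  push_cast
  ring

section NearestPoint

variable {R : Type*} [CommRing R] [LinearOrder R] [IsStrictOrderedRing R]

theorem min_sq_sub_eq_left {a b x : R} (hab : a ≤ b) (hx : 2 * x ≤ a + b) :
    min ((x - a)^2) ((x - b)^2) = (x - a)^2 :=
  min_eq_left (by nlinarith)

theorem min_sq_sub_eq_right {a b x : R} (hab : a ≤ b) (hx : a + b ≤ 2 * x) :
    min ((x - a)^2) ((x - b)^2) = (x - b)^2 :=
  min_eq_right (by nlinarith)

end NearestPoint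

theorem Finset.exists_le_eq_pair_of_card_le_two {β : Type*} [LinearOrder β] {s : Finset β}
    (hs : s.Nonempty) (hcard : s.card ≤ 2) : ∃ a b, a ≤ b ∧ s = {a, b} := by
  obtain h | h : s.card = 1 ∨ s.card = 2 := by have := hs.card_pos; omega
  · obtain ⟨a, rfl⟩ := card_eq_one.mp h
    exact ⟨a, a, le_rfl, by simp⟩
  · obtain ⟨a, b, -, rfl⟩ := card_eq_two.mp h
    rcases le_total a b with hab | hba
    · exact ⟨a, b, hab, rfl⟩
    · exact ⟨b, a, hba, pair_comm a b⟩

noncomputable def pairDistortion (a b : ℝ) (n : ℕ) : ℝ :=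
  (1/2^(n+1) : ℝ) * min (((n+1 : ℝ) - a)^2) (((n+1 : ℝ) - b)^2)

theorem errG_pair (a b : ℝ) (h : ({a, b} : Finset ℝ).Nonempty) :
    errG {a, b} h = ∑' n, pairDistortion a b n := by
  unfold errG pairDistortion
  congr! 3 with n
  rw [inf'_insert (singleton_nonempty b), inf'_singleton]

section PairDistortion

variable {a b : ℝ}

theorem pairDistortion_nonneg (n : ℕ) : 0 ≤ pairDistortion a b n := by
  unfold pairDistortion; positivity

theorem summable_pairDistortion : Summable (pairDistortion a b) :=
  (hasSum_geometric_sq_sub a).summable.of_nonneg_of_le pairDistortion_nonneg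
    fun _ => mul_le_mul_of_nonneg_left (min_le_left _ _) (by positivity)

theorem sum_range_pairDistortion (hab : a ≤ b) {k : ℕ} (hk : 2 * (k : ℝ) ≤ a + b) :
    ∑ n ∈ range k, pairDistortion a b n
      = ∑ n ∈ range k, (1/2^(n+1) : ℝ) * ((n+1 : ℝ) - a)^2 := by
  refine sum_congr rfl fun n hn => ?_
  have : (n : ℝ) + 1 ≤ k := by exact_mod_cast mem_range.mp hn
  rw [pairDistortion, min_sq_sub_eq_left hab (by linarith)]

theorem tsum_pairDistortion_nat_add (hab : a ≤ b) {k : ℕ} (hk : a + b ≤ 2 * (k + 1 : ℝ)) :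
    ∑' n, pairDistortion a b (n + k) = (1/2)^k * ((b - k - 2)^2 + 2) := by
  rw [← ((hasSum_geometric_sq_sub (b - k)).mul_left ((1/2)^k)).tsum_eq]
  refine tsum_congr fun n => ?_
  have : (0 : ℝ) ≤ n := n.cast_nonneg
  rw [pairDistortion, min_sq_sub_eq_right hab (by push_cast; linarith), one_div_pow, pow_add,
    pow_add]
  push_cast
  field_simp
  ring

theorem two_thirds_le_tsum_pairDistortion (hab : a ≤ b) :
    2/3 ≤ ∑' n, pairDistortion a b n := by
  rcases le_or_gt (a + b) 4 with h₄ | h₄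
  · rw [← summable_pairDistortion.sum_add_tsum_nat_add 1, tsum_pairDistortion_nat_add hab
      (by norm_num; linarith)]
    nlinarith [sum_nonneg fun n (_ : n ∈ range 1) => pairDistortion_nonneg (a := a) (b := b) n]
  rcases le_or_gt (a + b) 6 with h₆ | h₆
  · rw [← summable_pairDistortion.sum_add_tsum_nat_add 2, tsum_pairDistortion_nat_add hab
      (by norm_num; linarith), sum_range_pairDistortion hab (by norm_num; linarith)]
    simp only [sum_range_succ, sum_range_zero]
    norm_num
    nlinarith [sq_nonneg (3*a - 4), sq_nonneg (b - 4)]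
  rcases le_or_gt (a + b) 8 with h₈ | h₈
  · rw [← summable_pairDistortion.sum_add_tsum_nat_add 3, tsum_pairDistortion_nat_add hab
      (by norm_num; linarith), sum_range_pairDistortion hab (by norm_num; linarith)]
    simp only [sum_range_succ, sum_range_zero]
    norm_num
    nlinarith [sq_nonneg (7*a - 11), sq_nonneg (b - 5)]
  · rw [← summable_pairDistortion.sum_add_tsum_nat_add 4,
      sum_range_pairDistortion hab (by norm_num; linarith)]
    have htail : 0 ≤ ∑' n, pairDistortion a b (n + 4) :=
      tsum_nonneg fun n => pairDistortion_nonneg _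
    simp only [sum_range_succ, sum_range_zero]
    norm_num
    nlinarith [sq_nonneg (15*a - 26)]

end PairDistortion

theorem tsum_pairDistortion_four_thirds_four : ∑' n, pairDistortion (4/3) 4 n = 2/3 := by
  rw [← summable_pairDistortion.sum_add_tsum_nat_add 2,
    tsum_pairDistortion_nat_add (by norm_num) (by norm_num),
    sum_range_pairDistortion (by norm_num) (by norm_num)]
  simp only [sum_range_succ, sum_range_zero]
  norm_num

theorem stmt12 :
    sInf {v : ℝ | ∃ (α : Finset ℝ) (h : α.Nonempty), α.card ≤ 2 ∧ v = errG α h}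
      = 2/3 ∧
    errG {4/3, 4} (by simp) = 2/3 := by
  have hopt : errG {4/3, 4} (by simp) = 2/3 := by
    rw [errG_pair, tsum_pairDistortion_four_thirds_four]
  refine ⟨IsLeast.csInf_eq ⟨⟨{4/3, 4}, by simp, card_le_two, hopt.symm⟩, ?_⟩, hopt⟩
  rintro v ⟨α, hα, hcard, rfl⟩
  obtain ⟨a, b, hab, rfl⟩ := exists_le_eq_pair_of_card_le_two hα hcard
  rw [errG_pair]
  exact two_thirds_le_tsum_pairDistortion hab
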